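/- arXiv:2507.10807 — 4 statements merged into one kernel-verified Lean document; each statement's English description precedes it below -/
import Mathlib

section
/- Let ω be a pure state on a unital C*-algebra A and let u be a unitary element of A such that ω(u* a u) = ω(a) for all a ∈ A. Then |ω(u)| = 1. -/
open scoped ComplexOrder
/-- A state on a unital C*-algebra: a linear functional that is positive and normalized. -/
def IsState {A : Type*} [NormedRing A] [StarRing A] [NormedAlgebra ℂ A]
    (ω : A →ₗ[ℂ] ℂ) : Prop :=
  ω 1 = 1 ∧ ∀ a : A, 0 ≤ ω (star a * a)

/-- A pure state: an extreme point of the state space. -/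
def IsPureState {A : Type*} [NormedRing A] [StarRing A] [NormedAlgebra ℂ A]
    (ω : A →ₗ[ℂ] ℂ) : Prop :=
  IsState ω ∧ ∀ φ ψ : A →ₗ[ℂ] ℂ, IsState φ → IsState ψ →
    ∀ t : ℝ, 0 < t → t < 1 → ω = (t : ℂ) • φ + ((1 - t : ℝ) : ℂ) • ψ → φ = ω

/-!
Instead of the GNS representation (in which `u` fixes the cyclic vector up to a phase), purity
is used directly. Conjugation invariance splits `ω` as the sum of the positive functionals
`a ↦ ω((1 ± u)⋆ a (1 ± u)) / 4`; as long as `|Re ω(u)| < 1` both are nonzero, so purity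
forces the first one to be a multiple of `ω`, and evaluating at `u` gives
`ω(u²) + 1 = 2 Re ω(u) · ω(u)`. If `|ω(u)| < 1` this applies to both `u` and `I • u`;
since `(I • u)² = -u²`, adding the two identities yields `|ω(u)|² = 1`, a contradiction.
The bound `|ω(u)| ≤ 1` is Cauchy–Schwarz for states.
-/

open Complex ComplexConjugate

section

variable {A : Type*} [NormedRing A] [StarRing A] [NormedAlgebra ℂ A]

def IsPositiveFunctional (φ : A →ₗ[ℂ] ℂ) : Prop :=
  ∀ a : A, 0 ≤ φ (star a * a)

namespace IsPositiveFunctional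

variable {φ : A →ₗ[ℂ] ℂ}

lemma im_map_star_mul_self (hφ : IsPositiveFunctional φ) (a : A) : (φ (star a * a)).im = 0 :=
  (Complex.nonneg_iff.mp (hφ a)).2.symm

lemma map_star [StarModule ℂ A] (hφ : IsPositiveFunctional φ) (a : A) :
    φ (star a) = conj (φ a) := by
  have h₀ := hφ.im_map_star_mul_self 1
  have h₁ := hφ.im_map_star_mul_self (1 + a)
  have h₂ := hφ.im_map_star_mul_self (1 + I • a)
  have hsa := hφ.im_map_star_mul_self a
  have e₁ : star (1 + a) * (1 + a) = star 1 * 1 + a + star a + star a * a := by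
    simp only [star_add, star_one]; noncomm_ring
  have e₂ : star (1 + I • a) * (1 + I • a) = star 1 * 1 + I • a - I • star a + star a * a := by
    simp only [star_add, star_one, star_smul, Complex.star_def, conj_I, add_mul, mul_add,
      smul_mul_assoc, mul_smul_comm, one_mul, mul_one]
    match_scalars <;> ring_nf
    simp [I_sq]
  rw [e₁] at h₁
  rw [e₂] at h₂
  simp only [map_add, map_sub, map_smul, smul_eq_mul, add_im, sub_im, mul_im, I_re, I_im] at h₁ h₂
  apply Complex.ext <;> simp only [conj_re, conj_im] <;> linarith

lemma comp_mulLeftRight (hφ : IsPositiveFunctional φ) (x : A) :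
    IsPositiveFunctional (φ ∘ₗ LinearMap.mulLeftRight ℂ (star x, x)) := by
  intro a
  simpa only [LinearMap.comp_apply, LinearMap.mulLeftRight_apply, star_mul, mul_assoc] using
    hφ (a * x)

lemma smul (hφ : IsPositiveFunctional φ) {c : ℂ} (hc : 0 ≤ c) : IsPositiveFunctional (c • φ) :=
  fun a => mul_nonneg hc (hφ a)

lemma isState_inv_smul (hφ : IsPositiveFunctional φ) {t : ℝ} (ht : 0 < t) (h1 : φ 1 = t) :
    IsState ((t : ℂ)⁻¹ • φ) := by
  have ht' : (t : ℂ) ≠ 0 := by exact_mod_cast ht.ne'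
  refine ⟨by simp [h1, ht'], hφ.smul ?_⟩
  rw [← ofReal_inv]
  exact_mod_cast (inv_pos.mpr ht).le

end IsPositiveFunctional

lemma IsState.normSq_apply_le [StarModule ℂ A] {ω : A →ₗ[ℂ] ℂ} (hω : IsState ω) (a : A) :
    normSq (ω a) ≤ (ω (star a * a)).re := by
  have hpos : IsPositiveFunctional ω := hω.2
  have expand : ω (star (a - ω a • 1) * (a - ω a • 1)) = ω (star a * a) - normSq (ω a) := by
    simp only [star_sub, star_smul, star_one, Complex.star_def, sub_mul, mul_sub, smul_mul_assoc,
      mul_smul_comm, one_mul, mul_one, map_sub, map_smul, hω.1, hpos.map_star, smul_eq_mul,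
      ← mul_conj]
    ring
  have h := hpos (a - ω a • 1)
  rw [expand, sub_nonneg] at h
  exact_mod_cast (Complex.le_def.1 h).1

lemma IsPureState.eq_smul_of_eq_add {ω φ ψ : A →ₗ[ℂ] ℂ} (hω : IsPureState ω)
    (hφ : IsPositiveFunctional φ) (hψ : IsPositiveFunctional ψ) (hsum : ω = φ + ψ)
    {t : ℝ} (ht₀ : 0 < t) (ht₁ : t < 1) (hφ₁ : φ 1 = t) : φ = (t : ℂ) • ω := by
  have hψ₁ : ψ 1 = ((1 - t : ℝ) : ℂ) := by
    have h := LinearMap.congr_fun hsum 1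
    rw [LinearMap.add_apply, hω.1.1, hφ₁] at h
    push_cast
    linear_combination -h
  have ht : (t : ℂ) ≠ 0 := by exact_mod_cast ht₀.ne'
  have ht' : ((1 - t : ℝ) : ℂ) ≠ 0 := by exact_mod_cast (sub_pos.2 ht₁).ne'
  have hconvex : ω = (t : ℂ) • ((t : ℂ)⁻¹ • φ) + ((1 - t : ℝ) : ℂ) • (((1 - t : ℝ) : ℂ)⁻¹ • ψ) := by
    rw [smul_inv_smul₀ ht, smul_inv_smul₀ ht', hsum]
  rw [← hω.2 _ _ (hφ.isState_inv_smul ht₀ hφ₁) (hψ.isState_inv_smul (sub_pos.2 ht₁) hψ₁) t ht₀ ht₁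
    hconvex, smul_inv_smul₀ ht]

lemma IsPureState.map_mul_self_of_conj_invariant [StarModule ℂ A] {ω : A →ₗ[ℂ] ℂ} (hω : IsPureState ω)
    {u : A} (hu : star u * u = 1) (hinv : ∀ a, ω (star u * a * u) = ω a)
    (hre : |(ω u).re| < 1) :
    ω (u * u) + 1 = 2 * (ω u).re * ω u := by
  have hpos : IsPositiveFunctional ω := hω.1.2
  have hquarter : (0 : ℂ) ≤ 4⁻¹ := by norm_num [Complex.nonneg_iff]
  set φ := (4⁻¹ : ℂ) • (ω ∘ₗ LinearMap.mulLeftRight ℂ (star (1 + u), 1 + u))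
  set ψ := (4⁻¹ : ℂ) • (ω ∘ₗ LinearMap.mulLeftRight ℂ (star (1 - u), 1 - u))
  have hφ : ∀ a, φ a = 4⁻¹ * (2 * ω a + ω (star u * a) + ω (a * u)) := by
    intro a
    have e : star (1 + u) * a * (1 + u) = a + star u * a + a * u + star u * a * u := by
      simp only [star_add, star_one]; noncomm_ring
    simp only [φ, LinearMap.smul_apply, LinearMap.comp_apply, LinearMap.mulLeftRight_apply, e,
      map_add, hinv, smul_eq_mul]
    ring
  have hψ : ∀ a, ψ a = 4⁻¹ * (2 * ω a - ω (star u * a) - ω (a * u)) := by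
    intro a
    have e : star (1 - u) * a * (1 - u) = a - star u * a - a * u + star u * a * u := by
      simp only [star_sub, star_one]; noncomm_ring
    simp only [ψ, LinearMap.smul_apply, LinearMap.comp_apply, LinearMap.mulLeftRight_apply, e,
      map_add, map_sub, hinv, smul_eq_mul]
    ring
  have hsum : ω = φ + ψ := by
    ext a
    rw [LinearMap.add_apply, hφ, hψ]
    ring
  have hφ₁ : φ 1 = ((1 + (ω u).re) / 2 : ℝ) := by
    rw [hφ, one_mul, mul_one, hpos.map_star, hω.1.1, ← Complex.re_add_im (ω u)]
    apply Complex.ext <;> simp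
    ring
  have hφω := hω.eq_smul_of_eq_add ((hpos.comp_mulLeftRight _).smul hquarter)
    ((hpos.comp_mulLeftRight _).smul hquarter) hsum (by linarith [abs_lt.1 hre])
    (by linarith [abs_lt.1 hre]) hφ₁
  have h := LinearMap.congr_fun hφω u
  rw [hφ, hu, hω.1.1, LinearMap.smul_apply, smul_eq_mul] at h
  push_cast at h
  linear_combination 4 * h

end

theorem pure_state_unitary_invariant_abs_one_general
    {A : Type*} [NormedRing A] [StarRing A] [NormedAlgebra ℂ A]
    [StarModule ℂ A]
    (ω : A →ₗ[ℂ] ℂ) (hω : IsPureState ω)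
    (u : A) (hu : star u * u = 1 ∧ u * star u = 1)
    (hinv : ∀ a : A, ω (star u * a * u) = ω a) :
    ‖ω u‖ = 1 := by
  have hle : ‖ω u‖ ≤ 1 := by
    have h := hω.1.normSq_apply_le u
    rw [hu.1, hω.1.1, one_re, normSq_eq_norm_sq] at h
    exact (sq_le_one_iff₀ (norm_nonneg _)).1 h
  refine le_antisymm hle (not_lt.1 fun hlt => hlt.ne ?_)
  have hIu : ∀ a, star (I • u) * a * (I • u) = star u * a * u := by
    intro a
    rw [star_smul, smul_mul_assoc, smul_mul_assoc, mul_smul_comm, smul_smul, Complex.star_def,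
      conj_I, neg_mul, I_mul_I, neg_neg, one_smul]
  have h₁ := hω.map_mul_self_of_conj_invariant hu.1 hinv ((abs_re_le_norm _).trans_lt hlt)
  have h₂ := hω.map_mul_self_of_conj_invariant (u := I • u) (by rw [← mul_one (star _), hIu, mul_one, hu.1])
    (fun a => (congrArg ω (hIu a)).trans (hinv a))
    (by simpa using (abs_im_le_norm (ω u)).trans_lt hlt)
  simp only [smul_mul_smul_comm, I_mul_I, map_smul, smul_eq_mul, mul_re, I_re, I_im] at h₂
  have hnorm_sq : ((‖ω u‖ ^ 2 : ℝ) : ℂ) = 1 := by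
    have hconj : conj (ω u) = (ω u).re - (ω u).im * I := by apply Complex.ext <;> simp
    push_cast at h₂ ⊢
    rw [← mul_conj', hconj]
    linear_combination -(h₁ + h₂) / 2
  exact (pow_eq_one_iff_of_nonneg (norm_nonneg _) two_ne_zero).1 (by exact_mod_cast hnorm_sq)

/-- If ω is a pure state on a unital C*-algebra and u is a unitary with
ω(u* a u) = ω(a) for all a, then |ω(u)| = 1. -/
theorem pure_state_unitary_invariant_abs_one
    {A : Type*} [NormedRing A] [StarRing A] [CStarRing A] [NormedAlgebra ℂ A]
    [CompleteSpace A] [StarModule ℂ A]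
    (ω : A →ₗ[ℂ] ℂ) (hω : IsPureState ω)
    (u : A) (hu : star u * u = 1 ∧ u * star u = 1)
    (hinv : ∀ a : A, ω (star u * a * u) = ω a) :
    ‖ω u‖ = 1 :=
  pure_state_unitary_invariant_abs_one_general ω hω u hu hinv
end

section
/- Let A be a unital C*-algebra, δ a *-derivation with domain D(δ), and u, v ∈ D(δ) unitaries. Then vu ∈ D(δ) and (vu)* δ(vu) = u* v* δ(v) u + u* δ(u). Consequently, for states ω₁, ω₂, ω₃ with ω₂ = ω₁∘Ad_u, ω₃ = ω₂∘Ad_v (Ad_u(a) = u*au), the quantities N(ωᵢ,ωⱼ) := i·ωᵢ(w*δ(w)) satisfy additivity N(ω₁,ω₂) + N(ω₂,ω₃) = N(ω₁,ω₃). -/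
open scoped ComplexOrder

theorem star_mul_mul_add_mul_of_star_mul_self {A : Type*} [Semiring A] [StarMul A]
    {v : A} (hv : star v * v = 1) (u a b : A) :
    star (v * u) * (a * u + v * b) = star u * star v * a * u + star u * b := by
  rw [star_mul, mul_add, ← mul_assoc _ v, mul_assoc (star u) (star v) v, hv, mul_one,
    ← mul_assoc _ a]

section DomainDerivation

variable {R A : Type*} [CommSemiring R] [StarRing R] [Semiring A] [StarRing A] [Algebra R A]
  [StarModule R A] {S : StarSubalgebra R A} {δ : S →ₗ[R] A}

theorem star_mul_derivation_mul_of_star_mul_self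
    (hleibniz : ∀ x y : S, δ (x * y) = δ x * (y : A) + (x : A) * δ y)
    {u v : A} (hu : u ∈ S) (hv : v ∈ S) (hvU : star v * v = 1) :
    star (v * u) * δ ⟨v * u, mul_mem hv hu⟩ =
      star u * star v * δ ⟨v, hv⟩ * u + star u * δ ⟨u, hu⟩ := by
  rw [← star_mul_mul_add_mul_of_star_mul_self hvU]
  exact congrArg _ (hleibniz ⟨v, hv⟩ ⟨u, hu⟩)

end DomainDerivation

theorem derivation_cocycle_additivity_general
    {A : Type*} [NormedRing A] [StarRing A] [NormedAlgebra ℂ A]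
    [StarModule ℂ A]
    (S : StarSubalgebra ℂ A) (δ : S →ₗ[ℂ] A)
    (hleibniz : ∀ x y : S, δ (x * y) = δ x * (y : A) + (x : A) * δ y)
    (u v : A) (hu : u ∈ S) (hv : v ∈ S)
    (hvU : star v * v = 1 ∧ v * star v = 1)
    (ω₁ ω₂ : A →ₗ[ℂ] ℂ)
    (hAd₂ : ∀ a : A, ω₂ a = ω₁ (star u * a * u)) :
    v * u ∈ S ∧
      star (v * u) * δ ⟨v * u, mul_mem hv hu⟩ =
        star u * star v * δ ⟨v, hv⟩ * u + star u * δ ⟨u, hu⟩ ∧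
      Complex.I * ω₁ (star u * δ ⟨u, hu⟩) + Complex.I * ω₂ (star v * δ ⟨v, hv⟩) =
        Complex.I * ω₁ (star (v * u) * δ ⟨v * u, mul_mem hv hu⟩) := by
  have cocycle := star_mul_derivation_mul_of_star_mul_self hleibniz hu hv hvU.1
  refine ⟨mul_mem hv hu, cocycle, ?_⟩
  rw [cocycle, hAd₂, map_add, mul_add, add_comm]
  simp only [mul_assoc]

/-- Leibniz and cocycle identities for a *-derivation δ defined on a star-subalgebra
(its domain): for unitaries u, v in the domain, vu is in the domain,
(vu)*δ(vu) = u*v*δ(v)u + u*δ(u), and the index N(ωᵢ,ωⱼ) = i·ωᵢ(w*δ(w)) is additive: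
N(ω₁,ω₂) + N(ω₂,ω₃) = N(ω₁,ω₃) for ω₂ = ω₁∘Ad_u, ω₃ = ω₂∘Ad_v. -/
theorem derivation_cocycle_additivity
    {A : Type*} [NormedRing A] [StarRing A] [CStarRing A] [NormedAlgebra ℂ A]
    [CompleteSpace A] [StarModule ℂ A]
    (S : StarSubalgebra ℂ A) (δ : S →ₗ[ℂ] A)
    (hleibniz : ∀ x y : S, δ (x * y) = δ x * (y : A) + (x : A) * δ y)
    (hstar : ∀ x : S, δ (star x) = star (δ x))
    (u v : A) (hu : u ∈ S) (hv : v ∈ S)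
    (huU : star u * u = 1 ∧ u * star u = 1)
    (hvU : star v * v = 1 ∧ v * star v = 1)
    (ω₁ ω₂ ω₃ : A →ₗ[ℂ] ℂ)
    (hω₁ : IsState ω₁) (hω₂ : IsState ω₂) (hω₃ : IsState ω₃)
    (hAd₂ : ∀ a : A, ω₂ a = ω₁ (star u * a * u))
    (hAd₃ : ∀ a : A, ω₃ a = ω₂ (star v * a * v)) :
    v * u ∈ S ∧
      star (v * u) * δ ⟨v * u, mul_mem hv hu⟩ =
        star u * star v * δ ⟨v, hv⟩ * u + star u * δ ⟨u, hu⟩ ∧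
      Complex.I * ω₁ (star u * δ ⟨u, hu⟩) + Complex.I * ω₂ (star v * δ ⟨v, hv⟩) =
        Complex.I * ω₁ (star (v * u) * δ ⟨v * u, mul_mem hv hu⟩) :=
  derivation_cocycle_additivity_general S δ hleibniz u v hu hv hvU ω₁ ω₂ hAd₂
end

section
/- Let A be a unital C*-algebra, δ a *-derivation, ω a state with ω∘δ = 0 on D(δ), and u ∈ D(δ) unitary with ω∘Ad_u = ω and |ω(u)| = 1. Then ω(u* δ(u)) = 0. -/
open scoped ComplexOrder

/-!
Since `|ω(u)| = 1`, the element `g = u - ω(u)` has `ω(g* g) = ω(u* u) - |ω(u)|² = 0`, so by the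
degenerate case of the Cauchy–Schwarz inequality for the positive form `(a, b) ↦ ω(a* b)`,
`ω(g* b) = 0` for every `b`. Writing `u* = g* + conj ω(u)` then gives
`ω(u* δ(u)) = conj ω(u) · ω(δ(u)) = 0`.
-/

lemma Complex.eq_zero_of_forall_ofReal_mul_add_nonneg {z c : ℂ}
    (h : ∀ s : ℝ, 0 ≤ s * z + c) : z = 0 := by
  have him (s : ℝ) : s * z.im + c.im = 0 := by
    simpa using ((Complex.nonneg_iff.mp (h s)).2).symm
  have hre (s : ℝ) : 0 ≤ s * z.re + c.re := by
    simpa using (Complex.nonneg_iff.mp (h s)).1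
  apply Complex.ext
  · by_contra hz
    have := hre (-(c.re + 1) / z.re)
    rw [div_mul_cancel₀ _ hz] at this
    linarith
  · simp only [Complex.zero_im]
    linarith [him 0, him 1]

section PositiveFunctional

variable {A : Type*} [Ring A] [StarRing A] [Algebra ℂ A] [StarModule ℂ A] (ω : A →ₗ[ℂ] ℂ)

lemma map_star_smul_add_mul_smul_add (t : ℂ) (a b : A) :
    ω (star (t • a + b) * (t • a + b)) =
      star t * t * ω (star a * a) + star t * ω (star a * b) + t * ω (star b * a)
        + ω (star b * b) := by
  simp only [star_add, star_smul, add_mul, mul_add, smul_mul_assoc, mul_smul_comm,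
    map_add, map_smul, smul_eq_mul]
  ring

variable {ω}

lemma star_map_star_mul (hreal : ∀ a : A, (ω (star a * a)).im = 0) (a b : A) :
    star (ω (star a * b)) = ω (star b * a) := by
  have h1 := hreal ((1 : ℂ) • a + b)
  have hI := hreal (Complex.I • a + b)
  rw [map_star_smul_add_mul_smul_add] at h1 hI
  simp [hreal a, hreal b] at h1 hI
  apply Complex.ext <;> simp <;> linarith

lemma map_star_mul_eq_zero_of_map_star_mul_self_eq_zero
    (hpos : ∀ a : A, 0 ≤ ω (star a * a)) {g : A} (hg : ω (star g * g) = 0) (b : A) :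
    ω (star g * b) = 0 := by
  have key (t : ℂ) : 0 ≤ star t * ω (star g * b) + t * ω (star b * g) + ω (star b * b) := by
    have := hpos (t • g + b)
    rwa [map_star_smul_add_mul_smul_add, hg, mul_zero, zero_add] at this
  have hsum : ω (star g * b) + ω (star b * g) = 0 :=
    Complex.eq_zero_of_forall_ofReal_mul_add_nonneg (c := ω (star b * b)) fun s => by
      simpa [mul_add] using key s
  have hdiff : Complex.I * (ω (star b * g) - ω (star g * b)) = 0 :=
    Complex.eq_zero_of_forall_ofReal_mul_add_nonneg (c := ω (star b * b)) fun s => by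
      convert key (s * Complex.I) using 1
      simp
      ring
  linear_combination (hsum + Complex.I * hdiff) / 2
    + (ω (star g * b) - ω (star b * g)) / 2 * Complex.I_sq

lemma map_star_sub_smul_one_mul_sub_smul_one (hω1 : ω 1 = 1)
    (hreal : ∀ a : A, (ω (star a * a)).im = 0) (a : A) :
    ω (star (a - ω a • 1) * (a - ω a • 1)) = ω (star a * a) - star (ω a) * ω a := by
  have hstar : ω (star a) = star (ω a) := by simpa using (star_map_star_mul hreal 1 a).symm
  simp only [star_sub, star_smul, star_one, sub_mul, mul_sub, smul_mul_assoc, mul_smul_comm,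
    one_mul, mul_one, map_sub, map_smul, smul_eq_mul, hstar, hω1]
  ring

end PositiveFunctional

theorem invariant_state_derivation_vanishes_general
    {A : Type*} [NormedRing A] [StarRing A] [NormedAlgebra ℂ A]
    [StarModule ℂ A]
    (S : StarSubalgebra ℂ A) (δ : S →ₗ[ℂ] A)
    (ω : A →ₗ[ℂ] ℂ) (hω : IsState ω)
    (hδinv : ∀ x : S, ω (δ x) = 0)
    (u : A) (hu : u ∈ S)
    (huU : star u * u = 1 ∧ u * star u = 1)
    (habs : ‖ω u‖ = 1) :
    ω (star u * δ ⟨u, hu⟩) = 0 := by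
  obtain ⟨hω1, hpos⟩ := hω
  have hreal (a : A) : (ω (star a * a)).im = 0 := (Complex.nonneg_iff.mp (hpos a)).2.symm
  set g := u - ω u • (1 : A)
  have hg : ω (star g * g) = 0 := by
    rw [map_star_sub_smul_one_mul_sub_smul_one hω1 hreal, huU.1, hω1, Complex.star_def,
      Complex.conj_mul', habs]
    norm_num
  have hstar_u : star u = star g + star (ω u) • 1 := by simp [g]
  rw [hstar_u, add_mul, map_add, map_star_mul_eq_zero_of_map_star_mul_self_eq_zero hpos hg,
    smul_one_mul, map_smul, hδinv, smul_zero, zero_add]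

/-- If δ is a *-derivation on a unital C*-algebra, ω a δ-invariant state, and u a unitary
in the domain of δ with ω∘Ad_u = ω and |ω(u)| = 1, then ω(u*δ(u)) = 0. -/
theorem invariant_state_derivation_vanishes
    {A : Type*} [NormedRing A] [StarRing A] [CStarRing A] [NormedAlgebra ℂ A]
    [CompleteSpace A] [StarModule ℂ A]
    (S : StarSubalgebra ℂ A) (δ : S →ₗ[ℂ] A)
    (hleibniz : ∀ x y : S, δ (x * y) = δ x * (y : A) + (x : A) * δ y)
    (hstar : ∀ x : S, δ (star x) = star (δ x))
    (ω : A →ₗ[ℂ] ℂ) (hω : IsState ω)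
    (hδinv : ∀ x : S, ω (δ x) = 0)
    (u : A) (hu : u ∈ S)
    (huU : star u * u = 1 ∧ u * star u = 1)
    (hAd : ∀ a : A, ω (star u * a * u) = ω a)
    (habs : ‖ω u‖ = 1) :
    ω (star u * δ ⟨u, hu⟩) = 0 :=
  invariant_state_derivation_vanishes_general S δ ω hω hδinv u hu huU habs
end

section
/- Let V be a unitary on a Hilbert space H with V − 1 of finite rank. Then the implementer Γ(V) = 1 + Σ_{n≥1} (1/n!) dΓ(V−1, …, V−1) in the CAR algebra over H is a finite sum (terms with n > rank(V−1) vanish), and ‖dΓ(A₁,…,A_n)‖ ≤ ∏ᵢ ‖Aᵢ‖₁ for trace-class Aᵢ, so that ‖Γ(V)‖ ≤ exp(‖V−1‖₁). -/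
/-!
Every finite-rank operator has a singular value decomposition `T = ∑ⱼ |wⱼ⟩⟨vⱼ|` with
orthonormal `vⱼ`, pairwise orthogonal `wⱼ`, at most `rank T` terms, and `∑ⱼ ‖wⱼ‖ ≤ ‖T‖₁`
(pairing `wⱼ / ‖wⱼ‖` with `vⱼ` in the supremum defining `‖T‖₁`). Expanding `dΓ` multilinearly
along such decompositions reduces everything to rank-one arguments, where
`dΓ(|f₁⟩⟨g₁|, …, |fₙ⟩⟨gₙ|) = a*(fₙ)⋯a*(f₁) a(g₁)⋯a(gₙ)` has norm at most `∏ ‖fᵢ‖ ‖gᵢ‖`.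
This gives `‖dΓ(T₁, …, Tₙ)‖ ≤ ∏ ‖Tᵢ‖₁`, and hence the bound on `Γ(V)` by a partial sum of the
exponential series. If `n > rank(V - 1)`, every term of the expansion of `dΓ(V - 1, …, V - 1)`
repeats some creation operator `a*(w)`, and such a product vanishes because the `a*(w)`
anticommute, so that `a*(w)² = 0`.
-/

open scoped InnerProductSpace
open InnerProductSpace (rankOne)
open Module (finrank)

/-- The trace norm of a bounded operator on a Hilbert space, characterized as the
supremum of |∑ᵢ ⟪eᵢ, T fᵢ⟫| over pairs of finite orthonormal families. -/
noncomputable def traceNorm {H : Type*} [NormedAddCommGroup H] [InnerProductSpace ℂ H]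
    (T : H →L[ℂ] H) : ℝ :=
  sSup {r : ℝ | ∃ (n : ℕ) (e f : Fin n → H), Orthonormal ℂ e ∧ Orthonormal ℂ f ∧
    r = ‖∑ i, ⟪e i, T (f i)⟫_ℂ‖}

section AnticommutingProducts

variable {R : Type*} [Ring R]

theorem mul_list_prod_mul_self_eq_zero {x : R} {l : List R} (hanti : ∀ y ∈ l, x * y = -(y * x))
    (hx : x * x = 0) : x * l.prod * x = 0 := by
  induction l with
  | nil => simpa using hx
  | cons a t ih =>
    rw [List.forall_mem_cons] at hanti
    calc x * (a :: t).prod * x = -(a * (x * t.prod * x)) := by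
          rw [List.prod_cons, ← mul_assoc, hanti.1]; noncomm_ring
      _ = 0 := by rw [ih hanti.2, mul_zero, neg_zero]

theorem List.prod_eq_zero_of_anticomm_of_not_nodup {l : List R}
    (hanti : ∀ x ∈ l, ∀ y ∈ l, x * y = -(y * x)) (hsq : ∀ x ∈ l, x * x = 0) (hl : ¬ l.Nodup) :
    l.prod = 0 := by
  induction l with
  | nil => exact absurd List.nodup_nil hl
  | cons a t ih =>
    rw [List.prod_cons]
    by_cases ha : a ∈ t
    · obtain ⟨s, s', rfl⟩ := List.append_of_mem ha
      have hzero : a * s.prod * a = 0 :=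
        mul_list_prod_mul_self_eq_zero (fun y hy => hanti a (by simp) y (by simp [hy]))
          (hsq a (by simp))
      rw [List.prod_append, List.prod_cons, ← mul_assoc, ← mul_assoc, hzero, zero_mul]
    · rw [ih (fun x hx y hy => hanti x (.tail _ hx) y (.tail _ hy)) (fun x hx => hsq x (.tail _ hx))
        (fun ht => hl (List.nodup_cons.2 ⟨ha, ht⟩)), mul_zero]

end AnticommutingProducts

theorem eq_zero_of_eq_neg (𝕜 : Type*) {M : Type*} [DivisionRing 𝕜] [CharZero 𝕜]
    [AddCommGroup M] [Module 𝕜 M] {x : M} (h : x = -x) : x = 0 := by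
  have h2 : (2 : 𝕜) • x = 0 := by
    rw [two_smul]
    nth_rewrite 2 [h]
    exact add_neg_cancel x
  exact (smul_eq_zero.mp h2).resolve_left two_ne_zero

theorem CStarRing.norm_one_le {A : Type*} [NormedRing A] [StarRing A] [CStarRing A] :
    ‖(1 : A)‖ ≤ 1 := by
  nontriviality A
  exact CStarRing.norm_one.le

theorem List.norm_prod_ofFn_le {A : Type*} [SeminormedRing A] (h1 : ‖(1 : A)‖ ≤ 1) :
    ∀ {n : ℕ} (c : Fin n → A) {b : Fin n → ℝ}, (∀ i, ‖c i‖ ≤ b i) →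
      ‖(List.ofFn c).prod‖ ≤ ∏ i, b i
  | 0, _, _, _ => by simpa using h1
  | n + 1, c, b, hc => by
    rw [List.ofFn_succ, List.prod_cons, Fin.prod_univ_succ]
    exact (norm_mul_le _ _).trans (mul_le_mul (hc 0)
      (List.norm_prod_ofFn_le h1 _ fun i => hc i.succ) (norm_nonneg _)
      ((norm_nonneg _).trans (hc 0)))

section InnerProductSpace

variable {𝕜 E F : Type*} [RCLike 𝕜] [NormedAddCommGroup E] [InnerProductSpace 𝕜 E]
  [NormedAddCommGroup F] [InnerProductSpace 𝕜 F]

theorem orthonormal_inv_norm_smul {ι : Type*} {w : ι → E}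
    (hw : Pairwise fun i j => ⟪w i, w j⟫_𝕜 = 0) (h0 : ∀ i, w i ≠ 0) :
    Orthonormal 𝕜 fun i => (‖w i‖ : 𝕜)⁻¹ • w i :=
  ⟨fun i => norm_smul_inv_norm (h0 i), fun i j hij => by
    simp only [inner_smul_left, inner_smul_right, hw hij, mul_zero]⟩

theorem Orthonormal.norm_sum_inner_mul_inner_le {ι : Type*} [Fintype ι] {e f : ι → E}
    (he : Orthonormal 𝕜 e) (hf : Orthonormal 𝕜 f) (x y : E) :
    ‖∑ i, ⟪x, f i⟫_𝕜 * ⟪e i, y⟫_𝕜‖ ≤ ‖x‖ * ‖y‖ :=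
  calc ‖∑ i, ⟪x, f i⟫_𝕜 * ⟪e i, y⟫_𝕜‖ ≤ ∑ i, ‖⟪f i, x⟫_𝕜‖ * ‖⟪e i, y⟫_𝕜‖ := by
        refine (norm_sum_le _ _).trans_eq (Finset.sum_congr rfl fun i _ => ?_)
        rw [norm_mul, norm_inner_symm]
    _ ≤ √(∑ i, ‖⟪f i, x⟫_𝕜‖ ^ 2) * √(∑ i, ‖⟪e i, y⟫_𝕜‖ ^ 2) :=
        Real.sum_mul_le_sqrt_mul_sqrt _ _ _
    _ ≤ √(‖x‖ ^ 2) * √(‖y‖ ^ 2) := by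
        gcongr
        exacts [hf.sum_inner_products_le x, he.sum_inner_products_le y]
    _ = ‖x‖ * ‖y‖ := by rw [Real.sqrt_sq (norm_nonneg x), Real.sqrt_sq (norm_nonneg y)]

theorem LinearMap.exists_orthonormalBasis_pairwise_inner_eq_zero [FiniteDimensional 𝕜 E]
    (S : E →ₗ[𝕜] F) :
    ∃ e : OrthonormalBasis (Fin (finrank 𝕜 E)) 𝕜 E,
      Pairwise fun i j => ⟪S (e i), S (e j)⟫_𝕜 = 0 := by
  set S' := S.rangeRestrict
  have hsym : (LinearMap.adjoint S' ∘ₗ S').IsSymmetric := fun x y => by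
    simp only [LinearMap.comp_apply, LinearMap.adjoint_inner_left, LinearMap.adjoint_inner_right]
  refine ⟨hsym.eigenvectorBasis rfl, fun i j hij => ?_⟩
  set e := hsym.eigenvectorBasis rfl
  calc ⟪S (e i), S (e j)⟫_𝕜 = ⟪e i, LinearMap.adjoint S' (S' (e j))⟫_𝕜 := by
        rw [LinearMap.adjoint_inner_right]; rfl
    _ = 0 := by
        rw [← LinearMap.comp_apply, hsym.apply_eigenvectorBasis, inner_smul_right,
          e.orthonormal.inner_eq_zero hij, mul_zero]

theorem LinearMap.injective_rangeRestrict_comp_orthogonal_ker (T : E →ₗ[𝕜] F) :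
    Function.Injective (T.rangeRestrict ∘ₗ (LinearMap.ker T)ᗮ.subtype) := by
  rw [← LinearMap.ker_eq_bot, eq_bot_iff]
  intro x hx
  have hker : (x : E) ∈ LinearMap.ker T := by
    simpa [LinearMap.mem_ker, Subtype.ext_iff] using hx
  simpa using (Submodule.orthogonal_disjoint _).le_bot ⟨hker, x.2⟩

theorem ContinuousLinearMap.comp_starProjection_orthogonal_ker [CompleteSpace E]
    (T : E →L[𝕜] F) [(LinearMap.ker (T : E →ₗ[𝕜] F))ᗮ.HasOrthogonalProjection] :
    T ∘L (LinearMap.ker (T : E →ₗ[𝕜] F))ᗮ.starProjection = T := by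
  set K := (LinearMap.ker (T : E →ₗ[𝕜] F))ᗮ
  ext x
  have hmem : x - K.starProjection x ∈ LinearMap.ker (T : E →ₗ[𝕜] F) := by
    have := K.sub_starProjection_mem_orthogonal x
    rwa [Submodule.orthogonal_orthogonal_eq_closure,
      (T.isClosed_ker).submodule_topologicalClosure_eq] at this
  rw [LinearMap.mem_ker, map_sub, sub_eq_zero] at hmem
  exact hmem.symm

theorem ContinuousLinearMap.exists_eq_sum_rankOne_of_finiteDimensional [CompleteSpace E]
    (T : E →L[𝕜] F) [FiniteDimensional 𝕜 (LinearMap.range (T : E →ₗ[𝕜] F))] :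
    ∃ (m : ℕ) (w : Fin m → F) (v : Fin m → E),
      m ≤ finrank 𝕜 (LinearMap.range (T : E →ₗ[𝕜] F)) ∧ Orthonormal 𝕜 v ∧
      Pairwise (fun i j => ⟪w i, w j⟫_𝕜 = 0) ∧ (∀ j, w j ≠ 0) ∧
      T = ∑ j, rankOne 𝕜 (w j) (v j) := by
  set K := (LinearMap.ker (T : E →ₗ[𝕜] F))ᗮ
  have hinj := (T : E →ₗ[𝕜] F).injective_rangeRestrict_comp_orthogonal_ker
  have : FiniteDimensional 𝕜 K := FiniteDimensional.of_injective _ hinj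
  obtain ⟨e, he⟩ := ((T : E →ₗ[𝕜] F) ∘ₗ K.subtype).exists_orthonormalBasis_pairwise_inner_eq_zero
  refine ⟨_, fun j => T (e j), fun j => e j, LinearMap.finrank_le_finrank_of_injective hinj,
    e.orthonormal.comp_linearIsometry K.subtypeₗᵢ, he, fun j h => ?_, ?_⟩
  · exact e.orthonormal.ne_zero j (hinj (by simpa [Subtype.ext_iff] using h))
  · conv_lhs => rw [← T.comp_starProjection_orthogonal_ker, e.starProjection_eq_sum_rankOne]
    simp only [ContinuousLinearMap.comp_finsetSum, InnerProductSpace.comp_rankOne]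

end InnerProductSpace

section TraceNorm

variable {H : Type*} [NormedAddCommGroup H] [InnerProductSpace ℂ H]

theorem traceNorm_nonneg (T : H →L[ℂ] H) : 0 ≤ traceNorm T :=
  Real.sSup_nonneg <| by
    rintro _ ⟨n, e, f, -, -, rfl⟩
    exact norm_nonneg _

theorem norm_sum_inner_apply_le_of_eq_sum_rankOne {T : H →L[ℂ] H} {m : ℕ} {w v : Fin m → H}
    (hT : T = ∑ j, rankOne ℂ (w j) (v j)) {n : ℕ} {e f : Fin n → H}
    (he : Orthonormal ℂ e) (hf : Orthonormal ℂ f) :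
    ‖∑ i, ⟪e i, T (f i)⟫_ℂ‖ ≤ ∑ j, ‖w j‖ * ‖v j‖ := by
  have hsum : ∑ i, ⟪e i, T (f i)⟫_ℂ = ∑ j, ∑ i, ⟪v j, f i⟫_ℂ * ⟪e i, w j⟫_ℂ := by
    simp only [hT, sum_apply, InnerProductSpace.rankOne_apply, inner_sum, inner_smul_right]
    exact Finset.sum_comm
  rw [hsum]
  exact (norm_sum_le _ _).trans
    (Finset.sum_le_sum fun j _ => (he.norm_sum_inner_mul_inner_le hf _ _).trans_eq (mul_comm _ _))

theorem sum_norm_le_traceNorm {T : H →L[ℂ] H} {m : ℕ} {w v : Fin m → H}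
    (hv : Orthonormal ℂ v) (hw : Pairwise fun i j => ⟪w i, w j⟫_ℂ = 0) (h0 : ∀ j, w j ≠ 0)
    (hT : T = ∑ j, rankOne ℂ (w j) (v j)) :
    ∑ j, ‖w j‖ ≤ traceNorm T := by
  have hbdd : BddAbove {r : ℝ | ∃ (n : ℕ) (e f : Fin n → H), Orthonormal ℂ e ∧
      Orthonormal ℂ f ∧ r = ‖∑ i, ⟪e i, T (f i)⟫_ℂ‖} := by
    refine ⟨∑ j, ‖w j‖ * ‖v j‖, ?_⟩
    rintro _ ⟨n, e, f, he, hf, rfl⟩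
    exact norm_sum_inner_apply_le_of_eq_sum_rankOne hT he hf
  refine le_csSup hbdd ⟨m, _, v, orthonormal_inv_norm_smul hw h0, hv, ?_⟩
  have hTv : ∀ i, T (v i) = w i := fun i => by
    simp [hT, orthonormal_iff_ite.mp hv]
  have hterm : ∀ i, ⟪(‖w i‖ : ℂ)⁻¹ • w i, T (v i)⟫_ℂ = (‖w i‖ : ℂ) := fun i => by
    rw [hTv, inner_smul_left, inner_self_eq_norm_sq_to_K, map_inv₀, Complex.conj_ofReal]
    field_simp [h0 i]
    rfl
  calc ∑ j, ‖w j‖ = ‖((∑ j, ‖w j‖ : ℝ) : ℂ)‖ := by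
        rw [Complex.norm_real, Real.norm_of_nonneg (by positivity)]
    _ = _ := by
        push_cast
        exact congrArg norm (Finset.sum_congr rfl fun i _ => (hterm i).symm)

end TraceNorm

section Multilinear

variable {R ι M N : Type*} [Semiring R] [AddCommMonoid M] [Module R M]

def MultilinearMap.ofUpdate [AddCommMonoid N] [Module R N] [dec : DecidableEq ι] (f : (ι → M) → N)
    (hadd : ∀ (x : ι → M) (i : ι) (y : M),
      f (Function.update x i (y + x i)) = f (Function.update x i y) + f x)
    (hsmul : ∀ (x : ι → M) (i : ι) (c : R), f (Function.update x i (c • x i)) = c • f x) :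
    MultilinearMap R (fun _ : ι => M) N where
  toFun := f
  map_update_add' {inst} x i y z := by
    obtain rfl := Subsingleton.elim inst dec
    simpa using hadd (Function.update x i z) i y
  map_update_smul' {inst} x i c y := by
    obtain rfl := Subsingleton.elim inst dec
    simpa using hsmul (Function.update x i y) i c

theorem MultilinearMap.norm_map_sum_le_prod_sum [SeminormedAddCommGroup N] [Module R N]
    [DecidableEq ι] [Fintype ι] (Φ : MultilinearMap R (fun _ : ι => M) N) {α : ι → Type*}
    [∀ i, Fintype (α i)] (x : ∀ i, α i → M) (c : ∀ i, α i → ℝ)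
    (h : ∀ κ : ∀ i, α i, ‖Φ fun i => x i (κ i)‖ ≤ ∏ i, c i (κ i)) :
    ‖Φ fun i => ∑ j, x i j‖ ≤ ∏ i, ∑ j, c i j := by
  rw [Φ.map_sum, Finset.prod_univ_sum, Fintype.piFinset_univ]
  exact (norm_sum_le _ _).trans (Finset.sum_le_sum fun κ _ => h κ)

end Multilinear

theorem norm_one_add_sum_inv_factorial_smul_le_exp {𝕜 A : Type*} [RCLike 𝕜] [SeminormedRing A]
    [NormedSpace 𝕜 A] (h1 : ‖(1 : A)‖ ≤ 1) {t : ℝ} (ht : 0 ≤ t) (x : ℕ → A)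
    (hx : ∀ n, ‖x n‖ ≤ t ^ n) (r : ℕ) :
    ‖1 + ∑ n ∈ Finset.Icc 1 r, ((n.factorial : 𝕜)⁻¹) • x n‖ ≤ Real.exp t := by
  have hrange : Finset.range (r + 1) = insert 0 (Finset.Icc 1 r) := by
    ext n
    simp only [Finset.mem_range, Finset.mem_insert, Finset.mem_Icc]
    omega
  calc ‖1 + ∑ n ∈ Finset.Icc 1 r, ((n.factorial : 𝕜)⁻¹) • x n‖
      ≤ 1 + ∑ n ∈ Finset.Icc 1 r, t ^ n / n.factorial := by
        refine (norm_add_le _ _).trans (add_le_add h1 ((norm_sum_le _ _).trans ?_))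
        refine Finset.sum_le_sum fun n _ => ?_
        rw [norm_smul, norm_inv, RCLike.norm_natCast, inv_mul_eq_div]
        gcongr
        exact hx n
    _ = ∑ n ∈ Finset.range (r + 1), t ^ n / n.factorial := by
        rw [hrange, Finset.sum_insert (by simp)]
        simp
    _ ≤ Real.exp t := Real.sum_le_exp_of_nonneg ht _

section CAR

variable {H A : Type*}

/-- `a*(fₙ)⋯a*(f₁) a(g₁)⋯a(gₙ)`, where the creation operator `a*(f)` is `star (ann f)`. -/
def carMonomial [Monoid A] [Star A] (ann : H → A) {n : ℕ} (f g : Fin n → H) : A :=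
  (List.ofFn fun i => star (ann (f i.rev))).prod * (List.ofFn fun i => ann (g i)).prod

theorem carMonomial_eq_zero_of_not_injective [Ring A] [StarRing A] [Module ℂ A] {ann : H → A}
    (hanti : ∀ f g, ann f * ann g = -(ann g * ann f)) {n : ℕ} {f : Fin n → H}
    (hf : ¬ Function.Injective f) (g : Fin n → H) : carMonomial ann f g = 0 := by
  have hanti' : ∀ f g, star (ann f) * star (ann g) = -(star (ann g) * star (ann f)) :=
    fun f g => by rw [← star_mul, hanti, star_neg, star_mul]
  have hsq : ∀ f, star (ann f) * star (ann f) = 0 := fun f => eq_zero_of_eq_neg ℂ (hanti' f f)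
  rw [carMonomial, List.prod_eq_zero_of_anticomm_of_not_nodup, zero_mul]
  · simp only [List.mem_ofFn]
    rintro _ ⟨i, rfl⟩ _ ⟨j, rfl⟩
    exact hanti' _ _
  · simp only [List.mem_ofFn]
    rintro _ ⟨i, rfl⟩
    exact hsq _
  · rw [List.nodup_ofFn]
    exact fun hinj => hf fun a b hab => by simpa using @hinj a.rev b.rev (by simp [hab])

variable [NormedAddCommGroup H]

theorem norm_carMonomial_le [NormedRing A] [StarRing A] [CStarRing A] {ann : H → A}
    (hnorm : ∀ f, ‖ann f‖ ≤ ‖f‖) {n : ℕ} (f g : Fin n → H) :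
    ‖carMonomial ann f g‖ ≤ ∏ i, ‖f i‖ * ‖g i‖ :=
  calc ‖carMonomial ann f g‖ ≤ (∏ i, ‖f i.rev‖) * ∏ i, ‖g i‖ :=
        (norm_mul_le _ _).trans <| mul_le_mul
          (List.norm_prod_ofFn_le CStarRing.norm_one_le _ fun i => (norm_star _).trans_le (hnorm _))
          (List.norm_prod_ofFn_le CStarRing.norm_one_le _ fun i => hnorm _)
          (norm_nonneg _) (by positivity)
    _ = ∏ i, ‖f i‖ * ‖g i‖ := by
        rw [Fintype.prod_equiv Fin.revPerm (fun i => ‖f i.rev‖) (fun i => ‖f i‖) fun _ => rfl,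
          Finset.prod_mul_distrib]

variable [InnerProductSpace ℂ H] [CompleteSpace H]

theorem exists_eq_sum_rankOne_sum_le_traceNorm (T : H →L[ℂ] H)
    [FiniteDimensional ℂ (LinearMap.range (T : H →ₗ[ℂ] H))] :
    ∃ (m : ℕ) (w v : Fin m → H), m ≤ finrank ℂ (LinearMap.range (T : H →ₗ[ℂ] H)) ∧
      T = ∑ j, rankOne ℂ (w j) (v j) ∧ ∑ j, ‖w j‖ * ‖v j‖ ≤ traceNorm T := by
  obtain ⟨m, w, v, hm, hv, hw, h0, hT⟩ := T.exists_eq_sum_rankOne_of_finiteDimensional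
  refine ⟨m, w, v, hm, hT, ?_⟩
  simpa [hv.norm_eq_one] using sum_norm_le_traceNorm hv hw h0 hT

theorem norm_map_le_prod_traceNorm [NormedRing A] [StarRing A] [CStarRing A] [Module ℂ A]
    {ann : H → A} (hnorm : ∀ f, ‖ann f‖ ≤ ‖f‖) {n : ℕ}
    (Φ : MultilinearMap ℂ (fun _ : Fin n => H →L[ℂ] H) A)
    (hΦ : ∀ f g : Fin n → H, Φ (fun i => rankOne ℂ (f i) (g i)) = carMonomial ann f g)
    (T : Fin n → H →L[ℂ] H)
    (hT : ∀ i, FiniteDimensional ℂ (LinearMap.range (T i : H →ₗ[ℂ] H))) :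
    ‖Φ T‖ ≤ ∏ i, traceNorm (T i) := by
  choose m w v _ hdec hle using fun i => have := hT i; exists_eq_sum_rankOne_sum_le_traceNorm (T i)
  calc ‖Φ T‖ = ‖Φ fun i => ∑ j, rankOne ℂ (w i j) (v i j)‖ := by rw [← funext hdec]
    _ ≤ ∏ i, ∑ j, ‖w i j‖ * ‖v i j‖ := Φ.norm_map_sum_le_prod_sum _ _ fun κ => by
        rw [hΦ]
        exact norm_carMonomial_le hnorm _ _
    _ ≤ ∏ i, traceNorm (T i) :=
        Finset.prod_le_prod (fun i _ => by positivity) fun i _ => hle i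

theorem map_const_eq_zero_of_finrank_lt [Ring A] [StarRing A] [Module ℂ A] {ann : H → A}
    (hanti : ∀ f g, ann f * ann g = -(ann g * ann f)) {n : ℕ}
    (Φ : MultilinearMap ℂ (fun _ : Fin n => H →L[ℂ] H) A)
    (hΦ : ∀ f g : Fin n → H, Φ (fun i => rankOne ℂ (f i) (g i)) = carMonomial ann f g)
    (T : H →L[ℂ] H) [FiniteDimensional ℂ (LinearMap.range (T : H →ₗ[ℂ] H))]
    (hn : finrank ℂ (LinearMap.range (T : H →ₗ[ℂ] H)) < n) : Φ (fun _ => T) = 0 := by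
  obtain ⟨m, w, v, hm, hT, -⟩ := exists_eq_sum_rankOne_sum_le_traceNorm T
  rw [hT, Φ.map_sum]
  refine Finset.sum_eq_zero fun κ _ => ?_
  obtain ⟨i, j, hij, hκ⟩ :=
    Fintype.exists_ne_map_eq_of_card_lt κ (by simpa using hm.trans_lt hn)
  rw [hΦ, carMonomial_eq_zero_of_not_injective hanti fun hinj => hij (hinj (congrArg w hκ))]

end CAR

theorem car_implementer_bounds_general
    {H A : Type*} [NormedAddCommGroup H] [InnerProductSpace ℂ H] [CompleteSpace H]
    [NormedRing A] [StarRing A] [CStarRing A] [NormedAlgebra ℂ A]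
    (ann : H → A)
    (hanti : ∀ f g : H, ann f * ann g = -(ann g * ann f))
    (hnorm : ∀ f : H, ‖ann f‖ = ‖f‖)
    (dΓ : ∀ n : ℕ, (Fin n → (H →L[ℂ] H)) → A)
    (hrank1 : ∀ (n : ℕ) (f g : Fin n → H),
      dΓ n (fun i => (innerSL ℂ (g i)).smulRight (f i)) =
        (List.ofFn (fun i : Fin n => star (ann (f i.rev)))).prod *
          (List.ofFn (fun i : Fin n => ann (g i))).prod)
    (hadd : ∀ (n : ℕ) (T : Fin n → (H →L[ℂ] H)) (i : Fin n) (S : H →L[ℂ] H),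
      dΓ n (Function.update T i (S + T i)) = dΓ n (Function.update T i S) + dΓ n T)
    (hsmul : ∀ (n : ℕ) (T : Fin n → (H →L[ℂ] H)) (i : Fin n) (c : ℂ),
      dΓ n (Function.update T i (c • T i)) = c • dΓ n T)
    (V : H →L[ℂ] H)
    (r : ℕ) (hfin : FiniteDimensional ℂ ↥(LinearMap.range ((V - 1 : H →L[ℂ] H) : H →ₗ[ℂ] H)))
    (hr : Module.finrank ℂ ↥(LinearMap.range ((V - 1 : H →L[ℂ] H) : H →ₗ[ℂ] H)) = r) :
    (∀ n : ℕ, r < n → dΓ n (fun _ => V - 1) = 0) ∧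
      (∀ (n : ℕ) (T : Fin n → (H →L[ℂ] H)),
        (∀ i, FiniteDimensional ℂ ↥(LinearMap.range ((T i : H →L[ℂ] H) : H →ₗ[ℂ] H))) →
          ‖dΓ n T‖ ≤ ∏ i, traceNorm (T i)) ∧
      ‖(1 : A) + ∑ n ∈ Finset.Icc 1 r, ((Nat.factorial n : ℂ)⁻¹) • dΓ n (fun _ => V - 1)‖ ≤
        Real.exp (traceNorm (V - 1)) := by
  let Γ n : MultilinearMap ℂ (fun _ : Fin n => H →L[ℂ] H) A :=
    .ofUpdate (dΓ n) (hadd n) (hsmul n)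
  have hbound n (T : Fin n → H →L[ℂ] H)
      (hT : ∀ i, FiniteDimensional ℂ (LinearMap.range (T i : H →ₗ[ℂ] H))) :
      ‖dΓ n T‖ ≤ ∏ i, traceNorm (T i) :=
    norm_map_le_prod_traceNorm (fun f => (hnorm f).le) (Γ n) (hrank1 n) T hT
  refine ⟨fun n hn => map_const_eq_zero_of_finrank_lt hanti (Γ n) (hrank1 n) (V - 1) (hr ▸ hn),
    hbound, ?_⟩
  refine norm_one_add_sum_inv_factorial_smul_le_exp CStarRing.norm_one_le (traceNorm_nonneg _) _
    (fun n => ?_) r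
  simpa using hbound n (fun _ => V - 1) fun _ => hfin

/-- For a unitary V with V − 1 of finite rank r, the CAR implementer
Γ(V) = 1 + Σₙ (1/n!)dΓ(V−1,…,V−1) is a finite sum (terms with n > r vanish), the
multilinear maps dΓ satisfy ‖dΓ(A₁,…,Aₙ)‖ ≤ ∏ᵢ‖Aᵢ‖₁, and ‖Γ(V)‖ ≤ exp(‖V−1‖₁). -/
theorem car_implementer_bounds
    {H A : Type*} [NormedAddCommGroup H] [InnerProductSpace ℂ H] [CompleteSpace H]
    [NormedRing A] [StarRing A] [CStarRing A] [NormedAlgebra ℂ A]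
    [CompleteSpace A] [StarModule ℂ A]
    (ann : H → A)
    (hanti : ∀ f g : H, ann f * ann g = -(ann g * ann f))
    (hccr : ∀ f g : H, ann f * star (ann g) + star (ann g) * ann f = (⟪g, f⟫_ℂ) • 1)
    (hnorm : ∀ f : H, ‖ann f‖ = ‖f‖)
    (dΓ : ∀ n : ℕ, (Fin n → (H →L[ℂ] H)) → A)
    (hrank1 : ∀ (n : ℕ) (f g : Fin n → H),
      dΓ n (fun i => (innerSL ℂ (g i)).smulRight (f i)) =
        (List.ofFn (fun i : Fin n => star (ann (f i.rev)))).prod *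
          (List.ofFn (fun i : Fin n => ann (g i))).prod)
    (hadd : ∀ (n : ℕ) (T : Fin n → (H →L[ℂ] H)) (i : Fin n) (S : H →L[ℂ] H),
      dΓ n (Function.update T i (S + T i)) = dΓ n (Function.update T i S) + dΓ n T)
    (hsmul : ∀ (n : ℕ) (T : Fin n → (H →L[ℂ] H)) (i : Fin n) (c : ℂ),
      dΓ n (Function.update T i (c • T i)) = c • dΓ n T)
    (V : H →L[ℂ] H) (hV : star V * V = 1 ∧ V * star V = 1)
    (r : ℕ) (hfin : FiniteDimensional ℂ ↥(LinearMap.range ((V - 1 : H →L[ℂ] H) : H →ₗ[ℂ] H)))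
    (hr : Module.finrank ℂ ↥(LinearMap.range ((V - 1 : H →L[ℂ] H) : H →ₗ[ℂ] H)) = r) :
    (∀ n : ℕ, r < n → dΓ n (fun _ => V - 1) = 0) ∧
      (∀ (n : ℕ) (T : Fin n → (H →L[ℂ] H)),
        (∀ i, FiniteDimensional ℂ ↥(LinearMap.range ((T i : H →L[ℂ] H) : H →ₗ[ℂ] H))) →
          ‖dΓ n T‖ ≤ ∏ i, traceNorm (T i)) ∧
      ‖(1 : A) + ∑ n ∈ Finset.Icc 1 r, ((Nat.factorial n : ℂ)⁻¹) • dΓ n (fun _ => V - 1)‖ ≤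
        Real.exp (traceNorm (V - 1)) :=
  car_implementer_bounds_general ann hanti hnorm dΓ hrank1 hadd hsmul V r hfin hr
end
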